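/- For the channels C = [[0,0,1],[1/2,1/2,0],[1/2,1/2,0]] and C̄ = [[1,0,0],[0,1/2,1/2],[0,1/2,1/2]] with uniform input distribution Π = (1/3)·I, and the oblivious utility matrix U = [[1,1,0],[0,0,1],[0,0,0]]: (a) C̄ is a Shannon-garbling of C (via the permutation reversing the input alphabet); (b) the maximal expected utility over the policy space of C equals 1/3, while that over the policy space of C̄ equals 2/3. Hence Shannon-garbling does not preserve Blackwell-usefulness with respect to oblivious utility matrices. -/

import Mathlib

/-!
The expected utility `tr (U * (A * C) * Π) = tr (A * W)`, with `W = C * Π * U`, is linear in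
the policy `A`, and column `j` of a column-stochastic `A` averages the entries of row `j` of `W`.
So the maximum over the policy space is `∑ j, maxᵢ W j i`, attained by the deterministic decoder
choosing a maximising `i` in every row. For `C`, `W = (1/6) [[0,0,0],[1,1,1],[1,1,1]]` gives `1/3`;
for `C̄ = C * P`, with `P` the permutation matrix of the reversal of the input alphabet,
`W = (1/6) [[2,2,0],[0,0,1],[0,0,1]]` gives `2/3`.
-/

open Matrix BigOperators

def ColStoch {m n : ℕ} (A : Matrix (Fin m) (Fin n) ℝ) : Prop :=
  (∀ i j, 0 ≤ A i j) ∧ ∀ j, ∑ i, A i j = 1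

def deterministicMatrix {m n : ℕ} (f : Fin n → Fin m) : Matrix (Fin m) (Fin n) ℝ :=
  Matrix.of fun i j => if f j = i then 1 else 0

theorem colStoch_one {n : ℕ} : ColStoch (1 : Matrix (Fin n) (Fin n) ℝ) := by
  refine ⟨fun i j => ?_, fun j => ?_⟩
  · rw [one_apply]; split_ifs <;> norm_num
  · simp [one_apply]

theorem colStoch_deterministicMatrix {m n : ℕ} (f : Fin n → Fin m) :
    ColStoch (deterministicMatrix f) := by
  refine ⟨fun i j => ?_, fun j => ?_⟩
  · simp only [deterministicMatrix, of_apply]; split_ifs <;> norm_num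
  · simp [deterministicMatrix]

theorem mul_deterministicMatrix {l m n : ℕ} (C : Matrix (Fin l) (Fin m) ℝ) (f : Fin n → Fin m) :
    C * deterministicMatrix f = C.submatrix id f := by
  ext i j; simp [deterministicMatrix, mul_apply]

theorem trace_deterministicMatrix_mul {m n : ℕ} (f : Fin n → Fin m)
    (W : Matrix (Fin n) (Fin m) ℝ) :
    (deterministicMatrix f * W).trace = ∑ j, W j (f j) := by
  simp only [trace, diag, mul_apply, deterministicMatrix, of_apply, ite_mul, one_mul, zero_mul]
  rw [Finset.sum_comm]
  simp

theorem ColStoch.trace_mul_le {m n : ℕ} {A : Matrix (Fin m) (Fin n) ℝ} (hA : ColStoch A)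
    {W : Matrix (Fin n) (Fin m) ℝ} {b : Fin n → ℝ} (hb : ∀ j i, W j i ≤ b j) :
    (A * W).trace ≤ ∑ j, b j :=
  calc (A * W).trace = ∑ j, ∑ i, A i j * W j i := by
        simp only [trace, diag, mul_apply]; exact Finset.sum_comm
    _ ≤ ∑ j, ∑ i, A i j * b j := by
        gcongr with j _ i _
        · exact hA.1 i j
        · exact hb j i
    _ = ∑ j, b j := by simp [← Finset.sum_mul, hA.2]

theorem isGreatest_trace_mul_of_le {m n : ℕ} (W : Matrix (Fin n) (Fin m) ℝ) (f : Fin n → Fin m)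
    (hf : ∀ j i, W j i ≤ W j (f j)) :
    IsGreatest {x | ∃ A : Matrix (Fin m) (Fin n) ℝ, ColStoch A ∧ x = (A * W).trace}
      (∑ j, W j (f j)) :=
  ⟨⟨deterministicMatrix f, colStoch_deterministicMatrix f,
      (trace_deterministicMatrix_mul f W).symm⟩,
    by rintro _ ⟨A, hA, rfl⟩; exact hA.trace_mul_le hf⟩

theorem isGreatest_expectedUtility {k m n : ℕ} (U : Matrix (Fin n) (Fin k) ℝ)
    (C : Matrix (Fin m) (Fin n) ℝ) (Pi : Matrix (Fin n) (Fin n) ℝ) (f : Fin m → Fin k)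
    (hf : ∀ j i, (C * Pi * U) j i ≤ (C * Pi * U) j (f j)) :
    IsGreatest {x | ∃ A : Matrix (Fin k) (Fin m) ℝ, ColStoch A ∧ x = (U * (A * C) * Pi).trace}
      (∑ j, (C * Pi * U) j (f j)) := by
  have trace_cycle : ∀ A : Matrix (Fin k) (Fin m) ℝ,
      (U * (A * C) * Pi).trace = (A * (C * Pi * U)).trace := fun A => by
    rw [trace_mul_comm, ← Matrix.mul_assoc, trace_mul_comm]
    simp only [Matrix.mul_assoc]
  simp_rw [trace_cycle]
  exact isGreatest_trace_mul_of_le _ f hf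

theorem failure_oblivious :
    let C : Matrix (Fin 3) (Fin 3) ℝ := !![0, 0, 1; 1/2, 1/2, 0; 1/2, 1/2, 0]
    let Cbar : Matrix (Fin 3) (Fin 3) ℝ := !![1, 0, 0; 0, 1/2, 1/2; 0, 1/2, 1/2]
    let Pi : Matrix (Fin 3) (Fin 3) ℝ := (3 : ℝ)⁻¹ • (1 : Matrix (Fin 3) (Fin 3) ℝ)
    let U : Matrix (Fin 3) (Fin 3) ℝ := !![1, 1, 0; 0, 0, 1; 0, 0, 0]
    (∃ M N : Matrix (Fin 3) (Fin 3) ℝ, ColStoch M ∧ ColStoch N ∧ Cbar = M * C * N) ∧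
    IsGreatest {x : ℝ | ∃ A : Matrix (Fin 3) (Fin 3) ℝ,
        ColStoch A ∧ x = (U * (A * C) * Pi).trace} (1/3) ∧
    IsGreatest {x : ℝ | ∃ A : Matrix (Fin 3) (Fin 3) ℝ,
        ColStoch A ∧ x = (U * (A * Cbar) * Pi).trace} (2/3) := by
  intro C Cbar Pi U
  have hW : C * Pi * U = !![0, 0, 0; 1/6, 1/6, 1/6; 1/6, 1/6, 1/6] := by
    ext i j
    fin_cases i <;> fin_cases j <;>
      norm_num [C, Pi, U, mul_apply, Fin.sum_univ_three, one_apply, cons_val_two, vecHead,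
        vecTail]
  have hWbar : Cbar * Pi * U = !![1/3, 1/3, 0; 0, 0, 1/6; 0, 0, 1/6] := by
    ext i j
    fin_cases i <;> fin_cases j <;>
      norm_num [Cbar, Pi, U, mul_apply, Fin.sum_univ_three, one_apply, cons_val_two, vecHead,
        vecTail]
  refine ⟨⟨1, deterministicMatrix Fin.rev, colStoch_one, colStoch_deterministicMatrix _, ?_⟩,
    ?_, ?_⟩
  · rw [Matrix.one_mul, mul_deterministicMatrix]
    ext i j; fin_cases i <;> fin_cases j <;> rfl
  · convert isGreatest_expectedUtility U C Pi ![0, 0, 0] ?_ using 1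
    · rw [hW]; norm_num [Fin.sum_univ_three, cons_val_two, vecHead, vecTail]
    · rw [hW]; intro j i
      fin_cases j <;> fin_cases i <;> norm_num [cons_val_two, vecHead, vecTail]
  · convert isGreatest_expectedUtility U Cbar Pi ![0, 2, 2] ?_ using 1
    · rw [hWbar]; norm_num [Fin.sum_univ_three, cons_val_two, vecHead, vecTail]
    · rw [hWbar]; intro j i
      fin_cases j <;> fin_cases i <;> norm_num [cons_val_two, vecHead, vecTail]
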